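/- arXiv:1308.2427 — 3 statements merged into one kernel-verified Lean document; each statement's English description precedes it below -/
import Mathlib

section
/- Let A and B be densely defined closeable operators in a complex Hilbert space H such that D(AB) and D(B*A*) are both dense. If the product adjoint equality (B*A*)* = A**B** holds, then the product closure(A)closure(B) is a closed operator and (closure(A)closure(B))* = closure(B*A*). If moreover A and B are closed, then AB is closed. -/
/-!
For a densely defined `T`, the graph of `T*` is the orthogonal complement of the graph of `T`
rotated by `(x, y) ↦ (y, -x)`. Taking the complement twice gives von Neumann's theorem:
`graph T**` is the closure of `graph T`, so `T` is closable iff `T*` is densely defined, and then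
`T** = closure T`. Under the hypothesis, `closure(A) closure(B) = A**B** = (B*A*)*` is an adjoint,
hence closed. It extends `AB`, so `(B*A*)*` is densely defined, `B*A*` is closable and
`(closure(A) closure(B))* = (B*A*)** = closure(B*A*)`.
-/

open LinearPMap

variable {H : Type*} [NormedAddCommGroup H] [InnerProductSpace ℂ H] [CompleteSpace H]

/-- The graph of the unbounded-operator product `A ∘ B`,
i.e. the linear relation `{(x, z) : ∃ y, (x, y) ∈ graph B ∧ (y, z) ∈ graph A}`. -/
noncomputable def LinearPMap.productGraph (A B : H →ₗ.[ℂ] H) : Submodule ℂ (H × H) where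
  carrier := {p : H × H | ∃ y : H, (p.1, y) ∈ B.graph ∧ (y, p.2) ∈ A.graph}
  add_mem' := by
    rintro p q ⟨y, hy1, hy2⟩ ⟨z, hz1, hz2⟩
    exact ⟨y + z, add_mem hy1 hz1, add_mem hy2 hz2⟩
  zero_mem' := ⟨0, zero_mem _, zero_mem _⟩
  smul_mem' := by
    rintro c p ⟨y, hy1, hy2⟩
    exact ⟨c • y, Submodule.smul_mem _ c hy1, Submodule.smul_mem _ c hy2⟩

/-- The product (composition) `A ∘ B` of two unbounded operators: its domain is
`{x ∈ D(B) : B x ∈ D(A)}` and it sends `x` to `A (B x)`. -/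
noncomputable def LinearPMap.product (A B : H →ₗ.[ℂ] H) : H →ₗ.[ℂ] H :=
  (A.productGraph B).toLinearPMap

/-- An unbounded operator is normal if it is densely defined, closed and `T*T = TT*`
(equality of unbounded operators, including equality of domains). -/
def LinearPMap.IsNormalOp (T : H →ₗ.[ℂ] H) : Prop :=
  Dense (T.domain : Set H) ∧ T.IsClosed ∧ (T†).product T = T.product (T†)

/-- `B` is relatively bounded with respect to `T` (`B` is `T`-bounded): `D(T) ⊆ D(B)` and
`‖B x‖ ≤ a ‖x‖ + b ‖T x‖` on `D(T)` for some constants `a, b ≥ 0`. -/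
def LinearPMap.IsRelativelyBounded (B T : H →ₗ.[ℂ] H) : Prop :=
  T.domain ≤ B.domain ∧ ∃ a b : ℝ, 0 ≤ a ∧ 0 ≤ b ∧
    ∀ (x : H) (hxT : x ∈ T.domain) (hxB : x ∈ B.domain),
      ‖B ⟨x, hxB⟩‖ ≤ a * ‖x‖ + b * ‖T ⟨x, hxT⟩‖

namespace Submodule

variable {𝕜 E F : Type*} [RCLike 𝕜] [NormedAddCommGroup E] [InnerProductSpace 𝕜 E]
  [NormedAddCommGroup F] [InnerProductSpace 𝕜 F]

theorem isClosed_adjoint (g : Submodule 𝕜 (E × F)) : IsClosed (g.adjoint : Set (F × E)) := by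
  rw [Submodule.adjoint, map_coe, LinearEquiv.coe_coe, LinearEquiv.image_eq_preimage_symm]
  exact (isClosed_orthogonal _).preimage (WithLp.prod_continuous_toLp _ _ _)

theorem le_adjoint_adjoint (g : Submodule 𝕜 (E × F)) : g ≤ g.adjoint.adjoint := by
  intro x hx
  rw [mem_adjoint_iff]
  intro c d hcd
  have h := congrArg (starRingEnd 𝕜) ((mem_adjoint_iff g (c, d)).1 hcd x.1 x.2 hx)
  simp only [_root_.map_sub, inner_conj_symm, _root_.map_zero] at h
  linear_combination -h

theorem adjoint_adjoint_le_topologicalClosure [CompleteSpace E] [CompleteSpace F]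
    (g : Submodule 𝕜 (E × F)) : g.adjoint.adjoint ≤ g.topologicalClosure := by
  intro x hx
  let K : Submodule 𝕜 (WithLp 2 (E × F)) :=
    g.topologicalClosure.comap (WithLp.linearEquiv 2 𝕜 (E × F)).toLinearMap
  have : CompleteSpace K :=
    (g.isClosed_topologicalClosure.preimage (WithLp.prod_continuous_ofLp 2 E F)).completeSpace_coe
  suffices WithLp.toLp 2 x ∈ Kᗮᗮ by rwa [K.orthogonal_orthogonal] at this
  intro w hw
  -- A vector `w ⊥ g` rotates into `g.adjoint`, and pairing it with `x ∈ g.adjoint.adjoint`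
  -- gives `⟪w, x⟫ = 0`.
  have hgw : ((w.snd, -w.fst) : F × E) ∈ g.adjoint := by
    rw [mem_adjoint_iff]
    intro a b hab
    have h := hw (WithLp.toLp 2 (a, b)) (g.le_topologicalClosure hab)
    simp only [WithLp.prod_inner_apply, WithLp.ofLp_fst, WithLp.ofLp_snd] at h
    simp only [inner_neg_right]
    linear_combination h
  have h := (mem_adjoint_iff _ x).1 hx _ _ hgw
  simp only [inner_neg_left] at h
  simp only [WithLp.prod_inner_apply, WithLp.ofLp_fst, WithLp.ofLp_snd]
  linear_combination -h

theorem adjoint_adjoint [CompleteSpace E] [CompleteSpace F] (g : Submodule 𝕜 (E × F)) :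
    g.adjoint.adjoint = g.topologicalClosure :=
  le_antisymm g.adjoint_adjoint_le_topologicalClosure
    (topologicalClosure_minimal _ g.le_adjoint_adjoint g.adjoint.isClosed_adjoint)

end Submodule

namespace LinearPMap

variable {𝕜 E F : Type*} [RCLike 𝕜] [NormedAddCommGroup E] [InnerProductSpace 𝕜 E]
  [NormedAddCommGroup F] [InnerProductSpace 𝕜 F] {T : E →ₗ.[𝕜] F}

theorem IsClosed.closure_eq (hT : T.IsClosed) : T.closure = T :=
  eq_of_eq_graph <| by
    rw [← hT.isClosable.graph_closure_eq_closure_graph, hT.submodule_topologicalClosure_eq]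

variable [CompleteSpace E] [CompleteSpace F]

theorem graph_adjoint_adjoint (hT : Dense (T.domain : Set E)) (hT' : Dense (T†.domain : Set F)) :
    T††.graph = T.graph.topologicalClosure := by
  rw [adjoint_graph_eq_graph_adjoint hT', adjoint_graph_eq_graph_adjoint hT,
    Submodule.adjoint_adjoint]

theorem isClosable_of_dense_adjoint_domain (hT : Dense (T.domain : Set E))
    (hT' : Dense (T†.domain : Set F)) : T.IsClosable :=
  ⟨T††, (graph_adjoint_adjoint hT hT').symm⟩

theorem adjoint_adjoint_eq_closure (hT : Dense (T.domain : Set E))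
    (hT' : Dense (T†.domain : Set F)) : T†† = T.closure :=
  eq_of_eq_graph <| by
    rw [graph_adjoint_adjoint hT hT',
      (isClosable_of_dense_adjoint_domain hT hT').graph_closure_eq_closure_graph]

theorem dense_adjoint_domain (hT : Dense (T.domain : Set E)) (hTc : T.IsClosable) :
    Dense (T†.domain : Set F) := by
  rw [Submodule.dense_iff_topologicalClosure_eq_top, Submodule.topologicalClosure_eq_top_iff,
    Submodule.eq_bot_iff]
  intro z hz
  have hgraph : ((0 : E), z) ∈ T.closure.graph := by
    rw [← hTc.graph_closure_eq_closure_graph, ← Submodule.adjoint_adjoint,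
      ← adjoint_graph_eq_graph_adjoint hT, Submodule.mem_adjoint_iff]
    intro a b hab
    rw [inner_zero_right, zero_sub, neg_eq_zero]
    exact hz a (mem_domain_of_mem_graph hab)
  exact T.closure.graph_fst_eq_zero_snd hgraph rfl

section

omit [CompleteSpace H]

theorem productGraph_fst_eq_zero_snd (A B : H →ₗ.[ℂ] H) :
    ∀ p ∈ A.productGraph B, p.1 = 0 → p.2 = 0 := by
  rintro ⟨x, z⟩ ⟨y, hxy, hyz⟩ (rfl : x = 0)
  obtain rfl : y = 0 := B.graph_fst_eq_zero_snd hxy rfl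
  exact A.graph_fst_eq_zero_snd hyz rfl

theorem graph_product (A B : H →ₗ.[ℂ] H) : (A.product B).graph = A.productGraph B :=
  Submodule.toLinearPMap_graph_eq _ (productGraph_fst_eq_zero_snd A B)

theorem product_mono {A A' B B' : H →ₗ.[ℂ] H} (hA : A ≤ A') (hB : B ≤ B') :
    A.product B ≤ A'.product B' := by
  refine le_of_le_graph ?_
  rw [graph_product, graph_product]
  rintro p ⟨y, hxy, hyz⟩
  exact ⟨y, le_graph_of_le hB hxy, le_graph_of_le hA hyz⟩

end

end LinearPMap

/-- If `(B*A*)* = A**B**`, then `closure(A)closure(B)` is closed and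
`(closure(A)closure(B))* = closure(B*A*)`; if moreover `A` and `B` are closed then `AB`
is closed. -/
theorem statement1 (A B : H →ₗ.[ℂ] H)
    (hA : Dense (A.domain : Set H)) (hB : Dense (B.domain : Set H))
    (hAc : A.IsClosable) (hBc : B.IsClosable)
    (hAB : Dense ((A.product B).domain : Set H))
    (hBA : Dense (((B†).product (A†)).domain : Set H))
    (heq : ((B†).product (A†))† = (A††).product (B††)) :
    (A.closure.product B.closure).IsClosed ∧
      (A.closure.product B.closure)† = ((B†).product (A†)).closure ∧
      (A.IsClosed → B.IsClosed → (A.product B).IsClosed) := by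
  have hA' : A†† = A.closure := adjoint_adjoint_eq_closure hA (dense_adjoint_domain hA hAc)
  have hB' : B†† = B.closure := adjoint_adjoint_eq_closure hB (dense_adjoint_domain hB hBc)
  set S := (B†).product (A†)
  have hS : S† = A.closure.product B.closure := by rw [heq, hA', hB']
  have hSd : Dense (S†.domain : Set H) :=
    hAB.mono (hS ▸ (product_mono A.le_closure B.le_closure).1)
  have hclosed : (A.closure.product B.closure).IsClosed := hS ▸ adjoint_isClosed hBA
  refine ⟨hclosed, ?_, fun hAcl hBcl => ?_⟩
  · rw [← hS, adjoint_adjoint_eq_closure hBA hSd]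
  · rwa [hAcl.closure_eq, hBcl.closure_eq] at hclosed
end

section
/- Let A and B be (possibly unbounded) self-adjoint operators in a complex Hilbert space H such that AB is densely defined, and suppose A commutes with B in the sense AB ⊆ BA. Then AB is a symmetric operator, BA is closeable, and (AB)* ⊇ closure(BA) ⊇ closure(AB) ⊇ AB. Furthermore, AB is self-adjoint if and only if (AB)* = closure(BA) = closure(AB) = AB. -/
open LinearPMap

variable {H : Type*} [NormedAddCommGroup H] [InnerProductSpace ℂ H] [CompleteSpace H]

section Aux

local notation "⟪" x ", " y "⟫" => @inner ℂ _ _ x y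

private lemma product_graph_eq (A B : H →ₗ.[ℂ] H) :
    (A.product B).graph = A.productGraph B := by
  apply Submodule.toLinearPMap_graph_eq
  rintro ⟨x, z⟩ ⟨y, hy1, hy2⟩ (hx : x = 0)
  subst hx
  have hy0 : y = 0 := B.graph_fst_eq_zero_snd hy1 rfl
  subst hy0
  exact A.graph_fst_eq_zero_snd hy2 rfl

private lemma mem_product_graph {A B : H →ₗ.[ℂ] H} {x z : H} :
    (x, z) ∈ (A.product B).graph ↔ ∃ y, (x, y) ∈ B.graph ∧ (y, z) ∈ A.graph := by
  rw [product_graph_eq]; exact Iff.rfl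

private lemma selfAdjoint_inner {A : H →ₗ.[ℂ] H} (hA : IsSelfAdjoint A)
    {x y w z : H} (hx : (x, w) ∈ A.graph) (hy : (y, z) ∈ A.graph) :
    ⟪w, y⟫ = ⟪x, z⟫ := by
  have hfa : A.IsFormalAdjoint A := by
    have h := adjoint_isFormalAdjoint (T := A) hA.dense_domain
    rwa [isSelfAdjoint_def.mp hA] at h
  rw [mem_graph_iff] at hx hy
  obtain ⟨u, hu1, hu2⟩ := hx
  obtain ⟨v, hv1, hv2⟩ := hy
  simp only at hu1 hu2 hv1 hv2
  rw [← hu2, ← hv1, ← hu1, ← hv2]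
  exact hfa u v

private lemma product_isFormalAdjoint {A B : H →ₗ.[ℂ] H}
    (hA : IsSelfAdjoint A) (hB : IsSelfAdjoint B) :
    (A.product B).IsFormalAdjoint (B.product A) := by
  intro u v
  have hu : ((u : H), (A.product B) u) ∈ (A.product B).graph := mem_graph _ u
  have hv : ((v : H), (B.product A) v) ∈ (B.product A).graph := mem_graph _ v
  rw [mem_product_graph] at hu hv
  obtain ⟨y, hy1, hy2⟩ := hu
  obtain ⟨s, hs1, hs2⟩ := hv
  calc ⟪(A.product B) u, (v : H)⟫ = ⟪y, s⟫ := selfAdjoint_inner hA hy2 hs1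
    _ = ⟪(u : H), (B.product A) v⟫ := selfAdjoint_inner hB hy1 hs2

private lemma adjoint_isClosed' {T : H →ₗ.[ℂ] H} (hT : Dense (T.domain : Set H)) :
    (T†).IsClosed := by
  have hgraph : ((T†).graph : Set (H × H)) =
      ⋂ x : T.domain, {p : H × H | ⟪p.2, (x : H)⟫ = ⟪p.1, T x⟫} := by
    ext ⟨y, z⟩
    simp only [Set.mem_iInter, Set.mem_setOf_eq, SetLike.mem_coe, mem_graph_iff]
    constructor
    · rintro ⟨u, hu1, hu2⟩ x
      rw [← hu1, ← hu2]
      exact adjoint_isFormalAdjoint hT u x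
    · intro h
      have hy : y ∈ (T†).domain := mem_adjoint_domain_of_exists y ⟨z, h⟩
      exact ⟨⟨y, hy⟩, rfl, adjoint_apply_eq hT ⟨y, hy⟩ h⟩
  rw [LinearPMap.IsClosed, hgraph]
  exact isClosed_iInter fun x =>
    isClosed_eq (Continuous.inner continuous_snd continuous_const)
      (Continuous.inner continuous_fst continuous_const)

private lemma closure_eq_self {f : H →ₗ.[ℂ] H} (hf : f.IsClosed) : f.closure = f :=
  eq_of_eq_graph
    (hf.isClosable.graph_closure_eq_closure_graph.symm.trans hf.submodule_topologicalClosure_eq)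

end Aux

/-- For self-adjoint `A`, `B` with `AB` densely defined and `AB ⊆ BA`:
`AB` is symmetric, `BA` is closeable, `(AB)* ⊇ closure(BA) ⊇ closure(AB) ⊇ AB`,
and `AB` is self-adjoint iff `(AB)* = closure(BA) = closure(AB) = AB`. -/
theorem statement9 (A B : H →ₗ.[ℂ] H)
    (hA : IsSelfAdjoint A) (hB : IsSelfAdjoint B)
    (hAB : Dense ((A.product B).domain : Set H))
    (hcomm : A.product B ≤ B.product A) :
    A.product B ≤ (A.product B)† ∧
      (B.product A).IsClosable ∧
      (B.product A).closure ≤ (A.product B)† ∧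
      (A.product B).closure ≤ (B.product A).closure ∧
      A.product B ≤ (A.product B).closure ∧
      (IsSelfAdjoint (A.product B) ↔
        ((A.product B)† = (B.product A).closure ∧
          (B.product A).closure = (A.product B).closure ∧
          (A.product B).closure = A.product B)) := by
  have hfa := product_isFormalAdjoint hA hB
  have hBAle : B.product A ≤ (A.product B)† := hfa.le_adjoint hAB
  have hadj_closed : ((A.product B)†).IsClosed := adjoint_isClosed' hAB
  have hBAclosable : (B.product A).IsClosable := hadj_closed.isClosable.leIsClosable hBAle
  have h1 : A.product B ≤ (A.product B)† := le_trans hcomm hBAle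
  have h2 : (B.product A).closure ≤ (A.product B)† := by
    have h := hadj_closed.isClosable.closure_mono hBAle
    rwa [closure_eq_self hadj_closed] at h
  have h3 : (A.product B).closure ≤ (B.product A).closure := hBAclosable.closure_mono hcomm
  have h4 : A.product B ≤ (A.product B).closure := le_closure _
  refine ⟨h1, hBAclosable, h2, h3, h4, ?_⟩
  constructor
  · intro hsa
    have heq : (A.product B)† = A.product B := isSelfAdjoint_def.mp hsa
    have e1 : (A.product B).closure = A.product B :=
      le_antisymm (le_trans h3 (heq ▸ h2)) h4
    have e2 : (B.product A).closure = (A.product B).closure :=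
      le_antisymm (h2.trans (le_of_eq (heq.trans e1.symm))) h3
    have e3 : (A.product B)† = (B.product A).closure :=
      le_antisymm ((le_of_eq heq).trans (h4.trans h3)) h2
    exact ⟨e3, e2, e1⟩
  · rintro ⟨e3, e2, e1⟩
    exact isSelfAdjoint_def.mpr (e3.trans (e2.trans e1))
end

section
/- Let A, B and AB all be densely defined closeable operators in a complex Hilbert space H. If closure(AB) ⊆ closure(A)closure(B), then closure(B) is relatively bounded with respect to closure(AB), and hence B is relatively bounded with respect to AB. -/
open LinearPMap

variable {H : Type*} [NormedAddCommGroup H] [InnerProductSpace ℂ H] [CompleteSpace H]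

theorem product_domain_le' (A B : H →ₗ.[ℂ] H) : (A.product B).domain ≤ B.domain := by
  intro x hx
  rw [LinearPMap.product, Submodule.toLinearPMap_domain] at hx
  obtain ⟨p, hp, rfl⟩ := hx
  obtain ⟨y, hy1, -⟩ := hp
  exact B.mem_domain_of_mem_graph hy1

theorem aux_bound (S T : H →ₗ.[ℂ] H) (hS : S.IsClosed) (hT : T.IsClosed)
    (hdom : T.domain ≤ S.domain) :
    ∃ a : ℝ, 0 ≤ a ∧ ∀ (x : H) (hxT : x ∈ T.domain) (hxS : x ∈ S.domain),
      ‖S ⟨x, hxS⟩‖ ≤ a * ‖x‖ + a * ‖T ⟨x, hxT⟩‖ := by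
  haveI : CompleteSpace T.graph := hT.completeSpace_coe
  have hmem : ∀ p : ↥T.graph, (p : H × H).1 ∈ S.domain := fun p =>
    hdom (T.mem_domain_of_mem_graph (x := (p : H × H).1) (y := (p : H × H).2) p.2)
  let ι : ↥T.graph →ₗ[ℂ] ↥S.domain :=
    { toFun := fun p => ⟨(p : H × H).1, hmem p⟩
      map_add' := fun p q => rfl
      map_smul' := fun c p => rfl }
  let f : ↥T.graph →ₗ[ℂ] H := S.toFun.comp ι
  have hgraph : IsClosed (f.graph : Set (↥T.graph × H)) := by
    have heq : (f.graph : Set (↥T.graph × H)) =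
        (fun q : ↥T.graph × H => (((q.1 : H × H)).1, q.2)) ⁻¹' (S.graph : Set (H × H)) := by
      ext q
      simp only [Set.mem_preimage, SetLike.mem_coe, LinearMap.mem_graph_iff]
      constructor
      · rintro hq
        rw [hq]
        exact S.mem_graph (ι q.1)
      · intro hq
        exact (S.image_iff (hmem q.1)).mpr hq
    rw [heq]
    exact hS.preimage (by fun_prop)
  have hcont := f.continuous_of_isClosed_graph hgraph
  let F : ↥T.graph →L[ℂ] H := ⟨f, hcont⟩
  refine ⟨‖F‖, ContinuousLinearMap.opNorm_nonneg F, fun x hxT hxS => ?_⟩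
  set p : ↥T.graph := ⟨(x, T ⟨x, hxT⟩), T.mem_graph ⟨x, hxT⟩⟩ with hp
  have hFp : F p = S ⟨x, hxS⟩ := rfl
  have hnorm : ‖p‖ ≤ ‖x‖ + ‖T ⟨x, hxT⟩‖ := by
    have : ‖p‖ = max ‖x‖ ‖T ⟨x, hxT⟩‖ := rfl
    rw [this]
    exact max_le (le_add_of_nonneg_right (norm_nonneg _))
      (le_add_of_nonneg_left (norm_nonneg _))
  calc ‖S ⟨x, hxS⟩‖ = ‖F p‖ := by rw [hFp]
    _ ≤ ‖F‖ * ‖p‖ := F.le_opNorm p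
    _ ≤ ‖F‖ * (‖x‖ + ‖T ⟨x, hxT⟩‖) := mul_le_mul_of_nonneg_left hnorm (ContinuousLinearMap.opNorm_nonneg F)
    _ = ‖F‖ * ‖x‖ + ‖F‖ * ‖T ⟨x, hxT⟩‖ := by ring

/-- If `A`, `B` and `AB` are densely defined and closeable and
`closure(AB) ⊆ closure(A)closure(B)`, then `closure(B)` is `closure(AB)`-bounded, and
hence `B` is `AB`-bounded. -/
theorem statement16 (A B : H →ₗ.[ℂ] H)
    (hA : Dense (A.domain : Set H)) (hB : Dense (B.domain : Set H))
    (hABd : Dense ((A.product B).domain : Set H))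
    (hAc : A.IsClosable) (hBc : B.IsClosable) (hABc : (A.product B).IsClosable)
    (h : (A.product B).closure ≤ A.closure.product B.closure) :
    B.closure.IsRelativelyBounded (A.product B).closure ∧
      B.IsRelativelyBounded (A.product B) := by
  have hT : (A.product B).closure.IsClosed := hABc.closure_isClosed
  have hS : B.closure.IsClosed := hBc.closure_isClosed
  have hdom : (A.product B).closure.domain ≤ B.closure.domain := fun x hx =>
    product_domain_le' _ _ (h.1 hx)
  obtain ⟨a, ha, hbd⟩ := aux_bound B.closure (A.product B).closure hS hT hdom
  refine ⟨⟨hdom, a, a, ha, ha, hbd⟩, fun x hx => product_domain_le' A B hx, a, a, ha, ha, ?_⟩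
  intro x hxT hxB
  have hxT' : x ∈ (A.product B).closure.domain := (A.product B).le_closure.1 hxT
  have hxB' : x ∈ B.closure.domain := B.le_closure.1 hxB
  have h1 : B ⟨x, hxB⟩ = B.closure ⟨x, hxB'⟩ := B.le_closure.2 rfl
  have h2 : (A.product B) ⟨x, hxT⟩ = (A.product B).closure ⟨x, hxT'⟩ :=
    (A.product B).le_closure.2 rfl
  rw [h1, h2]
  exact hbd x hxT' hxB'
end
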